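/- arXiv:2202.03927 — 4 statements merged into one kernel-verified Lean document; each statement's English description precedes it below -/
import Mathlib

section
/- Every matching that is R-stable (stable under the minority reserve policy) is also Q-stable (stable under the corresponding majority quota policy), i.e., if a matching has no blocking pair in the market with minority reserves r^m = q - q^M, then it has no blocking pair in the market with majority quotas q^M. -/
/-- An abstract school choice market with affirmative actions.  `minority s` means `s`
is a minority student; `pr s x y` means student `s` strictly prefers outcome `x` to
outcome `y` (outcomes are `some c` for a school `c`, or `none` for being unmatched);
`prio c s s'` means `s ≻_c s'`; `acceptable c s` means `s` is acceptable to school `c`;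
`cap c` is the capacity `q_c`; `quota c` the majority quota `q^M_c`, with corresponding
minority reserve `r^m_c = q_c - q^M_c`. -/
structure AMarket (α β : Type*) where
  minority : α → Prop
  pr : α → Option β → Option β → Prop
  prio : β → α → α → Prop
  acceptable : β → α → Prop
  cap : β → ℕ
  quota : β → ℕ

namespace AMarket

variable {α β : Type*}

/-- The minority reserve corresponding to the majority quota. -/
def reserve (M : AMarket α β) (c : β) : ℕ := M.cap c - M.quota c

/-- The set of students assigned to school `c` by `μ`. -/
def assigned (μ : α → Option β) (c : β) : Set α := {s | μ s = some c}

/-- The set of majority students assigned to school `c`. -/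
def majAssigned (M : AMarket α β) (μ : α → Option β) (c : β) : Set α :=
  {s | μ s = some c ∧ ¬ M.minority s}

/-- The set of minority students assigned to school `c`. -/
def minAssigned (M : AMarket α β) (μ : α → Option β) (c : β) : Set α :=
  {s | μ s = some c ∧ M.minority s}

/-- `μ` is a matching: each school gets at most `q_c` students, at most `q^M_c` of whom
are majority students. -/
def Feasible (M : AMarket α β) (μ : α → Option β) : Prop :=
  ∀ c, (assigned μ c).ncard ≤ M.cap c ∧ (majAssigned M μ c).ncard ≤ M.quota c

/-- `(s, c)` blocks `μ` under the majority quota policy. -/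
def QBlock (M : AMarket α β) (μ : α → Option β) (s : α) (c : β) : Prop :=
  M.pr s (some c) (μ s) ∧
    (((assigned μ c).ncard < M.cap c ∧ M.acceptable c s ∧
        (M.minority s ∨ (majAssigned M μ c).ncard < M.quota c)) ∨
      (M.minority s ∧ ∃ s' ∈ assigned μ c, M.prio c s s') ∨
      (¬ M.minority s ∧ (majAssigned M μ c).ncard < M.quota c ∧
        ∃ s' ∈ assigned μ c, M.prio c s s') ∨
      (¬ M.minority s ∧ (majAssigned M μ c).ncard = M.quota c ∧
        ∃ s' ∈ majAssigned M μ c, M.prio c s s'))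

/-- `(s, c)` blocks `μ` under the corresponding minority reserve policy. -/
def RBlock (M : AMarket α β) (μ : α → Option β) (s : α) (c : β) : Prop :=
  M.pr s (some c) (μ s) ∧
    (((assigned μ c).ncard < M.cap c ∧ M.acceptable c s) ∨
      (M.minority s ∧ ∃ s' ∈ assigned μ c, M.prio c s s') ∨
      (¬ M.minority s ∧ M.reserve c < (minAssigned M μ c).ncard ∧
        ∃ s' ∈ assigned μ c, M.prio c s s') ∨
      (¬ M.minority s ∧ (minAssigned M μ c).ncard ≤ M.reserve c ∧
        ∃ s' ∈ majAssigned M μ c, M.prio c s s'))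

/-- `μ` is Q-stable: individually rational and with no blocking pair under the
majority quota policy. -/
def QStable (M : AMarket α β) (μ : α → Option β) : Prop :=
  (∀ s, M.pr s (μ s) none) ∧ ∀ s c, ¬ QBlock M μ s c

/-- `μ` is R-stable: individually rational and with no blocking pair under the
minority reserve policy. -/
def RStable (M : AMarket α β) (μ : α → Option β) : Prop :=
  (∀ s, M.pr s (μ s) none) ∧ ∀ s c, ¬ RBlock M μ s c

end AMarket

open AMarket in
/-- Every R-stable matching (stable under the minority reserve policy
r^m = q − q^M) is also Q-stable (stable under the corresponding majority quota
policy q^M). -/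
theorem rstable_implies_qstable {α β : Type*} [Fintype α] (M : AMarket α β)
    (μ : α → Option β)
    (hq : ∀ c, M.quota c ≤ M.cap c)
    (hfeas : Feasible M μ)
    (hacc : ∀ c s s', M.prio c s s' → M.acceptable c s)
    (hR : RStable M μ) :
    QStable M μ := by
  classical
  obtain ⟨hir, hnb⟩ := hR
  refine ⟨hir, fun s c hQ => hnb s c ?_⟩
  have hsplit : (assigned μ c).ncard
      = (majAssigned M μ c).ncard + (minAssigned M μ c).ncard := by
    have hu : assigned μ c = majAssigned M μ c ∪ minAssigned M μ c := by
      ext x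
      simp only [assigned, majAssigned, minAssigned, Set.mem_setOf_eq,
        Set.mem_union]
      tauto
    have hd : Disjoint (majAssigned M μ c) (minAssigned M μ c) := by
      rw [Set.disjoint_left]
      rintro x ⟨_, hx⟩ ⟨_, hx'⟩
      exact hx hx'
    rw [hu, Set.ncard_union_eq hd (Set.toFinite _) (Set.toFinite _)]
  obtain ⟨hpr, hcase⟩ := hQ
  refine ⟨hpr, ?_⟩
  rcases hcase with ⟨h1, h2, _⟩ | h | ⟨hm, hmaj, s', hs', hp⟩ | ⟨hm, hmaj, s', hs', hp⟩
  · exact Or.inl ⟨h1, h2⟩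
  · exact Or.inr (Or.inl h)
  · by_cases hlt : (assigned μ c).ncard < M.cap c
    · exact Or.inl ⟨hlt, hacc c s s' hp⟩
    · refine Or.inr (Or.inr (Or.inl ⟨hm, ?_, s', hs', hp⟩))
      have hcap := le_antisymm ((hfeas c).1) (le_of_not_gt hlt)
      have : M.cap c = (majAssigned M μ c).ncard + (minAssigned M μ c).ncard := by
        rw [← hsplit, hcap]
      have := hq c
      unfold AMarket.reserve
      omega
  · refine Or.inr (Or.inr (Or.inr ⟨hm, ?_, s', hs', hp⟩))
    have hcap := (hfeas c).1
    rw [hsplit] at hcap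
    unfold AMarket.reserve
    omega
end

section
/- If a Q-stable matching μ in a market with majority quotas q^M is blocked by some student–school pair (s,c) under the corresponding minority reserve r^m = q − q^M, then necessarily: s is a majority student not in μ(c), c P_s μ(s), |μ(c) ∩ S^M| = q^M_c, |μ(c)| < q_c, and every majority student s' ∈ μ(c) ∩ S^M satisfies s' ≻_c s; in particular the school has exactly filled its majority quota but has unfilled total capacity. -/
open AMarket in
/-- If a Q-stable matching μ is blocked by (s, c) under the corresponding minority
reserve policy, then s is a majority student not in μ(c), c P_s μ(s), the school's
majority quota is exactly filled (|μ(c) ∩ S^M| = q^M_c) while its total capacity is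
not (|μ(c)| < q_c), and every majority student in μ(c) has higher priority than s. -/
theorem qstable_rblocked_characterization {α β : Type*} [Fintype α]
    (M : AMarket α β) (μ : α → Option β) (s : α) (c : β)
    (hq : ∀ c, M.quota c ≤ M.cap c)
    (hfeas : Feasible M μ)
    (hirr : ∀ t x, ¬ M.pr t x x)
    (htrans : ∀ t, Transitive (M.pr t))
    (htotal : ∀ c' t t', t ≠ t' → M.prio c' t t' ∨ M.prio c' t' t)
    (hreg : ∀ t c', ¬ M.minority t → M.pr t (some c') none → 0 < M.quota c')
    (hQ : QStable M μ)
    (hblock : RBlock M μ s c) :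
    ¬ M.minority s ∧ μ s ≠ some c ∧ M.pr s (some c) (μ s) ∧
      (majAssigned M μ c).ncard = M.quota c ∧
      (assigned μ c).ncard < M.cap c ∧
      ∀ s' ∈ majAssigned M μ c, M.prio c s' s := by

  classical
  obtain ⟨hpr, hcases⟩ := hblock
  have hne : μ s ≠ some c := fun h => hirr s (some c) (h ▸ hpr)
  have hsub : majAssigned M μ c ⊆ assigned μ c := fun t ht => ht.1
  have hsplit : (minAssigned M μ c).ncard + (majAssigned M μ c).ncard
      = (assigned μ c).ncard := by
    rw [← Set.ncard_union_eq (by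
      rw [Set.disjoint_left]; rintro t ⟨-, hm⟩ ⟨-, hnm⟩; exact hnm hm)
      (Set.toFinite _) (Set.toFinite _)]
    congr 1
    ext t
    simp only [Set.mem_union, minAssigned, majAssigned, assigned, Set.mem_setOf_eq]
    tauto
  have hnb := hQ.2 s c
  rcases hcases with ⟨hlt, hacc⟩ | ⟨hmin, hex⟩ | ⟨hnmin, hres, hex⟩ | ⟨hnmin, hres, hex⟩
  · -- main case
    have hnmin : ¬ M.minority s := by
      intro hmin
      exact hnb ⟨hpr, Or.inl ⟨hlt, hacc, Or.inl hmin⟩⟩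
    have hfull : (majAssigned M μ c).ncard = M.quota c := by
      rcases lt_or_eq_of_le (hfeas c).2 with h | h
      · exact absurd ⟨hpr, Or.inl ⟨hlt, hacc, Or.inr h⟩⟩ hnb
      · exact h
    refine ⟨hnmin, hne, hpr, hfull, hlt, fun s' hs' => ?_⟩
    by_contra hnp
    have hss' : s ≠ s' := by rintro rfl; exact hne hs'.1
    rcases htotal c s s' hss' with h | h
    · exact hnb ⟨hpr, Or.inr (Or.inr (Or.inr ⟨hnmin, hfull, s', hs', h⟩))⟩
    · exact hnp h
  · exact absurd ⟨hpr, Or.inr (Or.inl ⟨hmin, hex⟩)⟩ hnb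
  · -- reserve exceeded: then majAssigned < quota, QBlock case 3
    exfalso
    have h1 : (assigned μ c).ncard ≤ M.cap c := (hfeas c).1
    have h2 : M.cap c - M.quota c < (minAssigned M μ c).ncard := hres
    have hmaj : (majAssigned M μ c).ncard < M.quota c := by
      have := hq c
      omega
    exact hnb ⟨hpr, Or.inr (Or.inr (Or.inl ⟨hnmin, hmaj, hex⟩))⟩
  · exfalso
    rcases lt_or_eq_of_le (hfeas c).2 with h | h
    · obtain ⟨s', hs', hp⟩ := hex
      exact hnb ⟨hpr, Or.inr (Or.inr (Or.inl ⟨hnmin, h, s', hsub hs', hp⟩))⟩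
    · exact hnb ⟨hpr, Or.inr (Or.inr (Or.inr ⟨hnmin, h, hex⟩))⟩
end

section
/- If a matching μ produced as the outcome of some stated preference profile P' under the immediate acceptance mechanism with minority reserves (IAM-R) is not R-stable with respect to the students' true preferences, then P' is not a Nash equilibrium of the preference revelation game: the student s in some true-preference blocking pair (s,c) can profitably deviate by reporting a preference listing c first. -/
open Finset

/-- A school choice market with affirmative actions: students `α`, schools `β`.
`minority s` says whether student `s` is a minority student; `prio c` is the ranking
of students by school `c` (lower number = higher priority); `cap c` is the capacity
`q_c`; `quota c` is the majority quota `q^M_c` (the corresponding minority reserve is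
`r^m_c = q_c - q^M_c`). -/
structure Market (α β : Type*) where
  minority : α → Bool
  prio : β → α → ℕ
  cap : β → ℕ
  quota : β → ℕ

namespace Market

noncomputable section
open scoped Classical

variable {α β : Type*} [Fintype α] [DecidableEq α] [Fintype β] [DecidableEq β]

/-- The minority reserve corresponding to the majority quota: `r^m_c = q_c - q^M_c`. -/
def reserve (M : Market α β) (c : β) : ℕ := M.cap c - M.quota c

/-- Number of students assigned to school `c` under assignment `μ`. -/
def assignedCard (μ : α → Option β) (c : β) : ℕ :=
  (univ.filter fun s => μ s = some c).card

/-- Number of majority students assigned to school `c`. -/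
def majCard (M : Market α β) (μ : α → Option β) (c : β) : ℕ :=
  (univ.filter fun s => μ s = some c ∧ M.minority s = false).card

/-- Number of minority students assigned to school `c`. -/
def minCard (M : Market α β) (μ : α → Option β) (c : β) : ℕ :=
  (univ.filter fun s => μ s = some c ∧ M.minority s = true).card

/-- One applicant is considered: accepted if capacity remains and (for a majority
student) the majority quota is not yet exhausted. -/
def acceptFold (isMin : α → Bool) (st : List α × ℕ × ℕ) (a : α) : List α × ℕ × ℕ :=
  match st with
  | (acc, cLeft, qLeft) =>
    if cLeft = 0 then (acc, cLeft, qLeft)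
    else if isMin a then (a :: acc, cLeft - 1, qLeft)
    else if 0 < qLeft then (a :: acc, cLeft - 1, qLeft - 1)
    else (acc, cLeft, qLeft)

/-- The set of applicants a school permanently accepts in one round of the immediate
acceptance algorithm: first minority applicants up to the remaining minority reserve in
priority order, then remaining applicants in priority order up to remaining capacity,
never exceeding the remaining majority quota for majority students. -/
def acceptList (prio : α → ℕ) (isMin : α → Bool) (apps : List α)
    (capLeft quotaLeft resLeft : ℕ) : List α :=
  let sorted := apps.mergeSort (fun a b => prio a ≤ prio b)
  let resAcc := (sorted.filter fun a => isMin a).take resLeft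
  let rest := sorted.filter fun a => ¬ a ∈ resAcc
  resAcc ++ (rest.foldl (acceptFold isMin) ([], capLeft - resAcc.length, quotaLeft)).1

/-- State of the immediate acceptance algorithm: current (permanent) assignment and the
position of each student in her reported preference list. -/
structure IAMState (α β : Type*) where
  assign : α → Option β
  pos : α → ℕ

/-- One round of the immediate acceptance mechanism with affirmative actions.
If `useReserve = false` this is the majority-quota version (IAM-Q, `r^m = 0`);
if `useReserve = true` this is the minority-reserve version (IAM-R, `q^M = q`). -/
def iamRound (M : Market α β) (rep : α → List β) (useReserve : Bool)
    (st : IAMState α β) : IAMState α β :=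
  let capLeft : β → ℕ := fun c => M.cap c - assignedCard st.assign c
  let quotaLeft : β → ℕ := fun c =>
    if useReserve then capLeft c else M.quota c - majCard M st.assign c
  let resLeft : β → ℕ := fun c =>
    if useReserve then M.reserve c - minCard M st.assign c else 0
  let applies : α → Option β := fun s =>
    if st.assign s = none then (rep s)[st.pos s]? else none
  let accepted : β → List α := fun c =>
    acceptList (M.prio c) M.minority
      ((univ.filter fun s => applies s = some c).toList) (capLeft c) (quotaLeft c)
      (resLeft c)
  { assign := fun s =>
      match st.assign s with
      | some c => some c
      | none =>
        match applies s with
        | some c => if s ∈ accepted c then some c else none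
        | none => none
    pos := fun s => if (applies s).isSome then st.pos s + 1 else st.pos s }

/-- The immediate acceptance mechanism with affirmative actions (outcome). -/
def iam (M : Market α β) (rep : α → List β) (useReserve : Bool) : α → Option β :=
  ((iamRound M rep useReserve)^[(univ.sup fun s => (rep s).length) + 1]
    ⟨fun _ => none, fun _ => 0⟩).assign

/-- State of the top trading cycles algorithm. -/
structure TTCState (α β : Type*) where
  remaining : Finset α
  assign : α → Option β

/-- The student a school points to: if the reserve counter is positive and a minority
student remains, its highest-priority remaining minority student; otherwise its
highest-priority remaining student. -/
def schoolPoint (M : Market α β) (useReserve : Bool) (st : TTCState α β) (c : β) :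
    Option α :=
  let resLeft := if useReserve then M.reserve c - minCard M st.assign c else 0
  let mins := st.remaining.filter fun s => M.minority s = true
  if 0 < resLeft ∧ mins.Nonempty then mins.toList.argmin (M.prio c)
  else st.remaining.toList.argmin (M.prio c)

/-- The school a student points to: her most preferred acceptable school with a
remaining seat for her (positive capacity counter and, for a majority student in the
quota version, positive quota counter); `none` means she points to herself. -/
def studentPoint (M : Market α β) (rep : α → List β) (useReserve : Bool)
    (st : TTCState α β) (s : α) : Option β :=
  (rep s).find? fun c =>
    decide (0 < M.cap c - assignedCard st.assign c ∧
      (M.minority s = true ∨ useReserve = true ∨ 0 < M.quota c - majCard M st.assign c))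

/-- The successor map: a student points to a school which points back to a student. -/
def nextMap (M : Market α β) (rep : α → List β) (useReserve : Bool)
    (st : TTCState α β) (s : α) : α :=
  match studentPoint M rep useReserve st s with
  | none => s
  | some c =>
    match schoolPoint M useReserve st c with
    | none => s
    | some t => t

/-- A student lies on a (trading) cycle of the pointing maps. -/
def inCycle (M : Market α β) (rep : α → List β) (useReserve : Bool)
    (st : TTCState α β) (s : α) : Prop :=
  ∃ k ∈ Finset.Icc 1 (Fintype.card α), (nextMap M rep useReserve st)^[k] s = s

/-- One step of the top trading cycles mechanism with affirmative actions: all students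
in cycles are assigned to the school they point to (or to themselves) and removed. -/
def ttcStep (M : Market α β) (rep : α → List β) (useReserve : Bool)
    (st : TTCState α β) : TTCState α β :=
  let cyc := st.remaining.filter fun s => inCycle M rep useReserve st s
  { remaining := st.remaining \ cyc
    assign := fun s =>
      if s ∈ cyc then studentPoint M rep useReserve st s else st.assign s }

/-- The top trading cycles mechanism with affirmative actions: `useReserve = false`
gives the TTCM with majority quotas (TTCM-Q), `useReserve = true` gives the TTCM with
minority reserves (TTCM-R). -/
def ttcm (M : Market α β) (rep : α → List β) (useReserve : Bool) : α → Option β :=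
  ((ttcStep M rep useReserve)^[Fintype.card α] ⟨univ, fun _ => none⟩).assign

/-- Rank of an outcome in a preference list: smaller is better; being unmatched (or
matched to an unlisted school) has rank equal to the length of the list. -/
def rankOf (pref : List β) : Option β → ℕ
  | none => pref.length
  | some c => pref.idxOf c

/-- Student `s` strictly prefers outcome `x` to outcome `y`. -/
def prefStrict (pref : α → List β) (s : α) (x y : Option β) : Prop :=
  rankOf (pref s) x < rankOf (pref s) y

end

end Market

namespace Market

variable {α β : Type*} [Fintype α] [DecidableEq α] [Fintype β] [DecidableEq β]

/-- Student–school pair `(s, c)` blocks matching `μ` under the minority reserve policy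
`r^m = q - q^M`, with respect to the preference profile `pref`. -/
def RBlock (M : Market α β) (pref : α → List β) (μ : α → Option β)
    (s : α) (c : β) : Prop :=
  prefStrict pref s (some c) (μ s) ∧
    (assignedCard μ c < M.cap c ∨
      (M.minority s = true ∧ ∃ s', μ s' = some c ∧ M.prio c s < M.prio c s') ∨
      (M.minority s = false ∧ M.reserve c < minCard M μ c ∧
        ∃ s', μ s' = some c ∧ M.prio c s < M.prio c s') ∨
      (M.minority s = false ∧ minCard M μ c ≤ M.reserve c ∧
        ∃ s', μ s' = some c ∧ M.minority s' = false ∧ M.prio c s < M.prio c s'))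

/-- `μ` is R-stable w.r.t. `pref`: every student weakly prefers her assignment to being
unmatched, and no student–school pair blocks `μ` under the minority reserve policy. -/
def RStable (M : Market α β) (pref : α → List β) (μ : α → Option β) : Prop :=
  (∀ s c, μ s = some c → c ∈ pref s) ∧ ∀ s c, ¬ RBlock M pref μ s c

/-- `μ` respects school capacities. -/
def IsMatching (M : Market α β) (μ : α → Option β) : Prop :=
  ∀ c, assignedCard μ c ≤ M.cap c

/-- `rep` is a Nash equilibrium of the preference revelation game induced by the IAM
(with reserve if `useReserve`, with quota otherwise), evaluated at the true preferences
`truePref`: no student has a report giving her a strictly better assignment. -/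
def NashEq (M : Market α β) (truePref rep : α → List β) (useReserve : Bool) : Prop :=
  ∀ s dev, ¬ prefStrict truePref s
    (iam M (Function.update rep s dev) useReserve s) (iam M rep useReserve s)

end Market

/-!
Let `s` be a student of a blocking pair `(s, c)` and let her report `[c]`. Under IAM-R the
first round at `c` then runs on the old first-round applicants plus `s`, and admissions are
permanent. If `c` rejected `s` in that round, `c` would already be full after the first round
of the original profile, and a priority cutoff at `s` would hold there: if `s` is a minority
student, `c` fills its reserve and admits only students of priority at least hers, so later
rounds add nobody; if `s` is a majority student, every open seat goes to such a student, and
if `c` ends up with more minorities than its reserve, one of them holds an open seat and the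
reserve was filled ahead of her. In every case `(s, c)` cannot block. Priorities may tie, so
the two first rounds (with and without `s`) are compared by counting applicants above the
cutoff rather than student by student.
-/

namespace List

variable {γ : Type*} {p : γ → Bool} {l : List γ}

theorem countP_take_of_pairwise (hl : l.Pairwise fun a b => p b = true → p a = true)
    (k : ℕ) : (l.take k).countP p = min k (l.countP p) := by
  induction l generalizing k with
  | nil => simp
  | cons a l ih =>
    obtain ⟨ha, hl⟩ := pairwise_cons.1 hl
    cases k with
    | zero => simp
    | succ k =>
      by_cases hpa : p a
      · simp [hpa, ih hl k, Nat.succ_min_succ]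
      · have h0 : l.countP p = 0 := countP_eq_zero.2 fun b hb hpb => hpa (ha b hb hpb)
        simp [hpa, ih hl k, h0]

theorem lt_countP_of_not_mem_take (hl : l.Pairwise fun a b => p b = true → p a = true)
    {k : ℕ} {s : γ} (hs : s ∈ l) (hps : p s = true) (hsk : s ∉ l.take k) :
    k < l.countP p := by
  by_contra! hle
  have hdrop : s ∈ l.drop k := by
    rw [← take_append_drop k l] at hs
    exact (mem_append.1 hs).resolve_left hsk
  have hsplit := countP_append (p := p) (l₁ := l.take k) (l₂ := l.drop k)
  rw [take_append_drop, countP_take_of_pairwise hl, min_eq_right hle] at hsplit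
  have hpos : 0 < (l.drop k).countP p := countP_pos_iff.2 ⟨s, hdrop, hps⟩
  omega

end List

namespace Market

section SeatAllocation

variable {α : Type*} (prio : α → ℕ) (isMin : α → Bool)

def priorityOrder (apps : List α) : List α :=
  apps.mergeSort fun a b => prio a ≤ prio b

def reserveSeats (apps : List α) (res : ℕ) : List α :=
  ((priorityOrder prio apps).filter fun a => isMin a).take res

theorem pairwise_priorityOrder (apps : List α) :
    (priorityOrder prio apps).Pairwise fun a b => prio a ≤ prio b := by
  simpa [priorityOrder] using List.pairwise_mergeSort
    (le := fun a b => decide (prio a ≤ prio b))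
    (fun a b c hab hbc => by simp_all only [decide_eq_true_eq]; omega)
    (fun a b => by simp [Nat.le_total]) apps

theorem pairwise_priorityOrder_threshold (apps : List α) (v : ℕ) :
    (priorityOrder prio apps).Pairwise
      fun a b => decide (prio b ≤ v) = true → decide (prio a ≤ v) = true :=
  (pairwise_priorityOrder prio apps).imp fun hab hb => by
    simp only [decide_eq_true_eq] at hb ⊢; omega

theorem perm_priorityOrder (apps : List α) : (priorityOrder prio apps).Perm apps :=
  List.mergeSort_perm _ _

theorem nodup_priorityOrder {apps : List α} (hnd : apps.Nodup) :
    (priorityOrder prio apps).Nodup :=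
  (perm_priorityOrder prio apps).nodup_iff.2 hnd

variable {prio isMin} {apps : List α} {cap res : ℕ}

theorem foldl_acceptFold (l acc : List α) {k q : ℕ} (hkq : k ≤ q) :
    (l.foldl (acceptFold isMin) (acc, k, q)).1 = (l.take k).reverse ++ acc := by
  induction l generalizing acc k q with
  | nil => simp
  | cons a l ih =>
    cases k with
    | zero => simpa [acceptFold] using ih acc (Nat.zero_le q)
    | succ k =>
      by_cases hmin : isMin a
      · simpa [acceptFold, hmin] using ih (a :: acc) (by omega : k ≤ q)
      · simpa [acceptFold, hmin, (by omega : 0 < q)] using ih (a :: acc) (by omega : k ≤ q - 1)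

theorem mem_reserveSeats {u : α} (hu : u ∈ reserveSeats prio isMin apps res) :
    u ∈ apps ∧ isMin u = true := by
  have h := List.mem_filter.1 (List.mem_of_mem_take hu)
  exact ⟨(perm_priorityOrder prio apps).subset h.1, h.2⟩

theorem length_reserveSeats :
    (reserveSeats prio isMin apps res).length = min res (apps.countP isMin) := by
  rw [reserveSeats, List.length_take, ← List.countP_eq_length_filter,
    (perm_priorityOrder prio apps).countP_eq]

theorem countP_reserveSeats (v : ℕ) :
    (reserveSeats prio isMin apps res).countP (fun a => prio a ≤ v) =
      min res ((apps.filter isMin).countP fun a => prio a ≤ v) := by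
  rw [reserveSeats, List.countP_take_of_pairwise
    ((pairwise_priorityOrder_threshold prio apps v).filter _),
    ((perm_priorityOrder prio apps).filter _).countP_eq]

theorem lt_countP_of_not_mem_reserveSeats {s : α} (hs : s ∈ apps) (hmin : isMin s = true)
    (hsr : s ∉ reserveSeats prio isMin apps res) :
    res < (apps.filter isMin).countP fun a => prio a ≤ prio s := by
  rw [← ((perm_priorityOrder prio apps).filter _).countP_eq]
  exact List.lt_countP_of_not_mem_take ((pairwise_priorityOrder_threshold prio apps _).filter _)
    (List.mem_filter.2 ⟨(perm_priorityOrder prio apps).mem_iff.2 hs, hmin⟩) (by simp) hsr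

theorem prio_le_of_mem_reserveSeats {u w : α} (hw : w ∈ apps) (hmin : isMin w = true)
    (hwr : w ∉ reserveSeats prio isMin apps res) (hu : u ∈ reserveSeats prio isMin apps res) :
    prio u ≤ prio w := by
  have hwS : w ∈ (priorityOrder prio apps).filter fun a => isMin a :=
    List.mem_filter.2 ⟨(perm_priorityOrder prio apps).mem_iff.2 hw, hmin⟩
  rw [← List.take_append_drop res ((priorityOrder prio apps).filter fun a => isMin a)] at hwS
  exact ((pairwise_priorityOrder prio apps).filter _).rel_of_mem_take_of_mem_drop hu
    ((List.mem_append.1 hwS).resolve_left hwr)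

variable [DecidableEq α]

variable (prio isMin) in
def openPool (apps : List α) (res : ℕ) : List α :=
  (priorityOrder prio apps).filter fun a => ¬ a ∈ reserveSeats prio isMin apps res

variable (prio isMin) in
def openSeats (apps : List α) (cap res : ℕ) : List α :=
  (openPool prio isMin apps res).take (cap - (reserveSeats prio isMin apps res).length)

/-- `q` is the remaining majority quota; it never binds when `cap ≤ q`, as in IAM-R. -/
theorem acceptList_eq {q : ℕ} (hcq : cap ≤ q) :
    acceptList prio isMin apps cap q res =
      reserveSeats prio isMin apps res ++ (openSeats prio isMin apps cap res).reverse := by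
  unfold acceptList
  dsimp only
  rw [foldl_acceptFold _ _ ((Nat.sub_le _ _).trans hcq), List.append_nil]
  rfl

theorem mem_openPool_of_not_mem_reserveSeats {u : α} (hu : u ∈ apps)
    (hur : u ∉ reserveSeats prio isMin apps res) : u ∈ openPool prio isMin apps res :=
  List.mem_filter.2 ⟨(perm_priorityOrder prio apps).mem_iff.2 hu, by simpa using hur⟩

theorem mem_openSeats {u : α} (hu : u ∈ openSeats prio isMin apps cap res) :
    u ∈ apps ∧ u ∉ reserveSeats prio isMin apps res := by
  have h := List.mem_filter.1 (List.mem_of_mem_take hu)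
  exact ⟨(perm_priorityOrder prio apps).subset h.1, by simpa using h.2⟩

theorem mem_of_mem_acceptList {u : α} (hu : u ∈ acceptList prio isMin apps cap cap res) :
    u ∈ apps := by
  rw [acceptList_eq le_rfl, List.mem_append, List.mem_reverse] at hu
  exact hu.elim (fun h => (mem_reserveSeats h).1) (fun h => (mem_openSeats h).1)

theorem mem_openSeats_of_mem_acceptList {u : α}
    (hu : u ∈ acceptList prio isMin apps cap cap res) (hmaj : isMin u = false) :
    u ∈ openSeats prio isMin apps cap res := by
  rw [acceptList_eq le_rfl, List.mem_append, List.mem_reverse] at hu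
  exact hu.resolve_left fun h => by simp [(mem_reserveSeats h).2] at hmaj

theorem nodup_acceptList (hnd : apps.Nodup) :
    (acceptList prio isMin apps cap cap res).Nodup := by
  have hS := nodup_priorityOrder prio hnd
  rw [acceptList_eq le_rfl, List.nodup_append, List.nodup_reverse]
  refine ⟨(hS.filter _).sublist (List.take_sublist _ _),
    (hS.filter _).sublist (List.take_sublist _ _), ?_⟩
  rintro a ha b hb rfl
  exact (mem_openSeats (List.mem_reverse.1 hb)).2 ha

theorem countP_reserveSeats_add_countP_openPool (hnd : apps.Nodup) (p : α → Bool) :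
    (reserveSeats prio isMin apps res).countP p + (openPool prio isMin apps res).countP p =
      apps.countP p := by
  set S := priorityOrder prio apps
  set R := reserveSeats prio isMin apps res
  have hS : S.Nodup := nodup_priorityOrder prio hnd
  have hR : (S.filter fun a => a ∈ R).Perm R :=
    (List.perm_ext_iff_of_nodup (hS.filter _) ((hS.filter _).sublist (List.take_sublist _ _))).2
      fun a => by
        rw [List.mem_filter, decide_eq_true_eq]
        exact ⟨And.right, fun ha =>
          ⟨(perm_priorityOrder prio apps).mem_iff.2 (mem_reserveSeats ha).1, ha⟩⟩
  rw [← (perm_priorityOrder prio apps).countP_eq, List.countP_eq_countP_filter_add S p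
    (fun a => a ∈ R), hR.countP_eq]
  simp [openPool, R, S]

theorem length_reserveSeats_add_length_openPool (hnd : apps.Nodup) :
    (reserveSeats prio isMin apps res).length + (openPool prio isMin apps res).length =
      apps.length := by
  simpa [List.countP_true] using countP_reserveSeats_add_countP_openPool (res := res) hnd
    (fun _ => true)

theorem countP_openSeats (v : ℕ) :
    (openSeats prio isMin apps cap res).countP (fun a => prio a ≤ v) =
      min (cap - (reserveSeats prio isMin apps res).length)
        ((openPool prio isMin apps res).countP fun a => prio a ≤ v) :=
  List.countP_take_of_pairwise ((pairwise_priorityOrder_threshold prio apps v).filter _) _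

theorem lt_countP_openPool_of_not_mem_openSeats {s : α} (hs : s ∈ apps)
    (hsr : s ∉ reserveSeats prio isMin apps res) (hso : s ∉ openSeats prio isMin apps cap res) :
    cap - (reserveSeats prio isMin apps res).length <
      (openPool prio isMin apps res).countP fun a => prio a ≤ prio s :=
  List.lt_countP_of_not_mem_take ((pairwise_priorityOrder_threshold prio apps _).filter _)
    (mem_openPool_of_not_mem_reserveSeats hs hsr) (by simp) hso

theorem cap_le_length_acceptList (hnd : apps.Nodup) (h : cap ≤ apps.length) :
    cap ≤ (acceptList prio isMin apps cap cap res).length := by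
  have hsplit := length_reserveSeats_add_length_openPool (prio := prio) (isMin := isMin)
    (res := res) hnd
  rw [acceptList_eq le_rfl, List.length_append, List.length_reverse, openSeats,
    List.length_take]
  omega

theorem cap_lt_length_of_not_mem_acceptList (hnd : apps.Nodup) {s : α} (hs : s ∈ apps)
    (hrej : s ∉ acceptList prio isMin apps cap cap res) : cap < apps.length := by
  rw [acceptList_eq le_rfl, List.mem_append, List.mem_reverse, not_or] at hrej
  have hpool := lt_countP_openPool_of_not_mem_openSeats hs hrej.1 hrej.2
  have hsplit := length_reserveSeats_add_length_openPool (prio := prio) (isMin := isMin)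
    (res := res) hnd
  have := List.countP_le_length (p := fun a => decide (prio a ≤ prio s))
    (l := openPool prio isMin apps res)
  omega

/-- More than `res` admitted minorities put a minority `w` on an open seat, and the whole
reserve was filled ahead of `w`. -/
theorem forall_prio_le_of_reserve_lt_countP {v : ℕ}
    (hopen : ∀ u ∈ openSeats prio isMin apps cap res, prio u ≤ v)
    (hlt : res < (acceptList prio isMin apps cap cap res).countP isMin) :
    ∀ u ∈ acceptList prio isMin apps cap cap res, prio u ≤ v := by
  rw [acceptList_eq le_rfl] at hlt ⊢
  rw [List.countP_append, List.countP_reverse] at hlt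
  have hR := (List.countP_le_length (p := isMin)).trans
    (List.length_take_le res ((priorityOrder prio apps).filter fun a => isMin a))
  obtain ⟨w, hw, hwmin⟩ := List.countP_pos_iff.1
    (show 0 < (openSeats prio isMin apps cap res).countP isMin by
      unfold reserveSeats at hlt; omega)
  intro u hu
  rcases List.mem_append.1 hu with hu | hu
  · have hwR := mem_openSeats hw
    exact (prio_le_of_mem_reserveSeats hwR.1 hwmin hwR.2 hu).trans (hopen w hw)
  · exact hopen u (List.mem_reverse.1 hu)

section Newcomer

variable {X : Finset α} {s : α}

theorem countP_toList_insert_le (p : α → Bool) :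
    (insert s X).toList.countP p ≤ X.toList.countP p + 1 := by
  by_cases hs : s ∈ X
  · rw [Finset.insert_eq_of_mem hs]; omega
  · rw [(Finset.toList_insert hs).countP_eq, List.countP_cons]; split <;> omega

theorem countP_toList_insert_of_eq_false {p : α → Bool} (hp : p s = false) :
    (insert s X).toList.countP p = X.toList.countP p := by
  by_cases hs : s ∈ X
  · rw [Finset.insert_eq_of_mem hs]
  · simp [(Finset.toList_insert hs).countP_eq, hp]

theorem cap_le_length_acceptList_of_not_mem
    (hrej : s ∉ acceptList prio isMin (insert s X).toList cap cap res) :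
    cap ≤ (acceptList prio isMin X.toList cap cap res).length := by
  have h := cap_lt_length_of_not_mem_acceptList (insert s X).nodup_toList
    (Finset.mem_toList.2 (Finset.mem_insert_self s X)) hrej
  rw [Finset.length_toList] at h
  exact cap_le_length_acceptList X.nodup_toList
    (by rw [Finset.length_toList]; have := Finset.card_insert_le s X; omega)

theorem forall_openSeats_prio_le_of_not_mem
    (hlen : (reserveSeats prio isMin (insert s X).toList res).length ≤
      (reserveSeats prio isMin X.toList res).length)
    (hcount : (reserveSeats prio isMin X.toList res).countP (fun a => prio a ≤ prio s) ≤
      (reserveSeats prio isMin (insert s X).toList res).countP fun a => prio a ≤ prio s)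
    (hrej : s ∉ acceptList prio isMin (insert s X).toList cap cap res) :
    ∀ u ∈ openSeats prio isMin X.toList cap res, prio u ≤ prio s := by
  have hs : s ∈ (insert s X).toList := Finset.mem_toList.2 (Finset.mem_insert_self s X)
  rw [acceptList_eq le_rfl, List.mem_append, List.mem_reverse, not_or] at hrej
  have hpool' := lt_countP_openPool_of_not_mem_openSeats hs hrej.1 hrej.2
  have hsplit' := countP_reserveSeats_add_countP_openPool (prio := prio) (isMin := isMin)
    (res := res) (insert s X).nodup_toList fun a => prio a ≤ prio s
  have hsplit := countP_reserveSeats_add_countP_openPool (prio := prio) (isMin := isMin)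
    (res := res) X.nodup_toList fun a => prio a ≤ prio s
  have hN := countP_toList_insert_le (X := X) (s := s) fun a => prio a ≤ prio s
  have hO := countP_openSeats (prio := prio) (isMin := isMin) (cap := cap) (res := res)
    (apps := X.toList) (prio s)
  have hOlen : (openSeats prio isMin X.toList cap res).length ≤
      cap - (reserveSeats prio isMin X.toList res).length :=
    List.length_take_le _ _
  have hOcount := (openSeats prio isMin X.toList cap res).countP_le_length
    (p := fun a => prio a ≤ prio s)
  simpa using (List.countP_eq_length (l := openSeats prio isMin X.toList cap res)
    (p := fun a => prio a ≤ prio s)).1 (by omega)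

theorem forall_openSeats_prio_le_of_majority_not_mem (hmaj : isMin s = false)
    (hrej : s ∉ acceptList prio isMin (insert s X).toList cap cap res) :
    ∀ u ∈ openSeats prio isMin X.toList cap res, prio u ≤ prio s := by
  refine forall_openSeats_prio_le_of_not_mem ?_ ?_ hrej
  · rw [length_reserveSeats, length_reserveSeats, countP_toList_insert_of_eq_false hmaj]
  · rw [countP_reserveSeats, countP_reserveSeats, List.countP_filter, List.countP_filter,
      countP_toList_insert_of_eq_false (by simp [hmaj])]

/-- To be rejected, the minority student `s` had to be beaten by `res` minorities and by
`cap` applicants, all of weakly higher priority. -/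
theorem forall_prio_le_of_minority_not_mem (hmin : isMin s = true)
    (hrej : s ∉ acceptList prio isMin (insert s X).toList cap cap res) :
    (∀ u ∈ acceptList prio isMin X.toList cap cap res, prio u ≤ prio s) ∧
      res ≤ (acceptList prio isMin X.toList cap cap res).countP isMin := by
  have hs : s ∈ (insert s X).toList := Finset.mem_toList.2 (Finset.mem_insert_self s X)
  have hsr : s ∉ reserveSeats prio isMin (insert s X).toList res := fun h =>
    hrej (by rw [acceptList_eq le_rfl]; exact List.mem_append_left _ h)
  have hbeat := lt_countP_of_not_mem_reserveSeats hs hmin hsr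
  have hcount' := countP_reserveSeats (prio := prio) (isMin := isMin) (res := res)
    (apps := (insert s X).toList) (prio s)
  have hcount := countP_reserveSeats (prio := prio) (isMin := isMin) (res := res)
    (apps := X.toList) (prio s)
  rw [List.countP_filter] at hbeat hcount' hcount
  have hNm := countP_toList_insert_le (X := X) (s := s) fun a => prio a ≤ prio s && isMin a
  have hR := List.countP_le_length (p := fun a => prio a ≤ prio s)
    (l := reserveSeats prio isMin X.toList res)
  have hRlen : (reserveSeats prio isMin X.toList res).length ≤ res := List.length_take_le _ _
  have hRlen' : (reserveSeats prio isMin (insert s X).toList res).length ≤ res :=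
    List.length_take_le _ _
  have hopen := forall_openSeats_prio_le_of_not_mem (by omega) (by omega) hrej
  have hreserve := (List.countP_eq_length (l := reserveSeats prio isMin X.toList res)
    (p := fun a => prio a ≤ prio s)).1 (by omega)
  have hminR := (List.countP_eq_length (l := reserveSeats prio isMin X.toList res)
    (p := isMin)).2 fun u hu => (mem_reserveSeats hu).2
  rw [acceptList_eq le_rfl, List.countP_append]
  refine ⟨fun u hu => ?_, by omega⟩
  rw [List.mem_append, List.mem_reverse] at hu
  exact hu.elim (fun h => by simpa using hreserve u h) (hopen u)

end Newcomer

end SeatAllocation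

section Rounds

variable {α β : Type*} [Fintype α] [DecidableEq α] [DecidableEq β] (M : Market α β)

def roundApplicants (rep : α → List β) (st : IAMState α β) (c : β) : Finset α :=
  univ.filter fun u => (if st.assign u = none then (rep u)[st.pos u]? else none) = some c

noncomputable def roundChoice (rep : α → List β) (st : IAMState α β) (c : β) : List α :=
  acceptList (M.prio c) M.minority (roundApplicants rep st c).toList
    (M.cap c - assignedCard st.assign c) (M.cap c - assignedCard st.assign c)
    (M.reserve c - minCard M st.assign c)

def firstApplicants (rep : α → List β) (c : β) : Finset α :=
  univ.filter fun t => (rep t)[0]? = some c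

noncomputable def firstChoice (rep : α → List β) (c : β) : List α :=
  acceptList (M.prio c) M.minority (firstApplicants rep c).toList (M.cap c) (M.cap c)
    (M.reserve c)

noncomputable def firstRound (rep : α → List β) : IAMState α β :=
  iamRound M rep true ⟨fun _ => none, fun _ => 0⟩

theorem iamRound_assign_eq_some_iff (rep : α → List β) (st : IAMState α β) (t : α) (c : β) :
    (iamRound M rep true st).assign t = some c ↔
      st.assign t = some c ∨ (st.assign t = none ∧ t ∈ roundChoice M rep st c) := by
  have happ : t ∈ roundChoice M rep st c →
      (if st.assign t = none then (rep t)[st.pos t]? else none) = some c := fun h => by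
    simpa [roundApplicants] using mem_of_mem_acceptList h
  unfold iamRound
  cases hst : st.assign t with
  | some e => simp [hst]
  | none =>
    simp only [hst, if_true] at happ ⊢
    cases hap : (rep t)[st.pos t]? with
    | none => simp_all
    | some e =>
      simp only [hap] at happ ⊢
      by_cases he : e = c
      · subst he
        simp [roundChoice, roundApplicants]
      · have hnot : t ∉ roundChoice M rep st c := fun h => he (Option.some_injective _ (happ h))
        simp [he, hnot]

theorem iamRound_assign_of_eq_some (rep : α → List β) (useReserve : Bool)
    (st : IAMState α β) {t : α} {c : β} (h : st.assign t = some c) :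
    (iamRound M rep useReserve st).assign t = some c := by
  simp [iamRound, h]

theorem iterate_iamRound_assign_of_eq_some (rep : α → List β) (useReserve : Bool) (n : ℕ)
    (st : IAMState α β) {t : α} {c : β} (h : st.assign t = some c) :
    ((iamRound M rep useReserve)^[n] st).assign t = some c := by
  induction n generalizing st with
  | zero => exact h
  | succ n ih => exact ih _ (iamRound_assign_of_eq_some M rep useReserve st h)

omit [DecidableEq α] in
theorem assignedCard_le_of_imp {μ μ' : α → Option β} {c : β}
    (h : ∀ t, μ t = some c → μ' t = some c) : assignedCard μ c ≤ assignedCard μ' c :=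
  card_le_card fun t ht => by simp_all

omit [DecidableEq α] in
theorem minCard_le_of_imp {μ μ' : α → Option β} {c : β}
    (h : ∀ t, μ t = some c → μ' t = some c) : minCard M μ c ≤ minCard M μ' c :=
  card_le_card fun t ht => by simp_all

theorem firstRound_assign_eq_some_iff (rep : α → List β) (t : α) (c : β) :
    (firstRound M rep).assign t = some c ↔ t ∈ firstChoice M rep c := by
  have hcard : assignedCard (fun _ : α => (none : Option β)) c = 0 := by simp [assignedCard]
  have hmin : minCard M (fun _ : α => (none : Option β)) c = 0 := by simp [minCard]
  rw [firstRound, iamRound_assign_eq_some_iff]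
  simp [roundChoice, roundApplicants, firstChoice, firstApplicants, hcard, hmin]

theorem nodup_firstChoice (rep : α → List β) (c : β) : (firstChoice M rep c).Nodup :=
  nodup_acceptList (firstApplicants rep c).nodup_toList

theorem assignedCard_firstRound (rep : α → List β) (c : β) :
    assignedCard (firstRound M rep).assign c = (firstChoice M rep c).length := by
  rw [assignedCard, ← List.toFinset_card_of_nodup (nodup_firstChoice M rep c)]
  congr 1
  ext t
  simp [firstRound_assign_eq_some_iff]

theorem minCard_firstRound (rep : α → List β) (c : β) :
    minCard M (firstRound M rep).assign c = (firstChoice M rep c).countP M.minority := by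
  rw [minCard, List.countP_eq_length_filter,
    ← List.toFinset_card_of_nodup ((nodup_firstChoice M rep c).filter _)]
  congr 1
  ext t
  simp [firstRound_assign_eq_some_iff]

theorem iam_eq_iterate_firstRound (rep : α → List β) :
    iam M rep true =
      ((iamRound M rep true)^[univ.sup fun s => (rep s).length] (firstRound M rep)).assign := by
  rw [iam, Function.iterate_succ_apply]
  rfl

theorem iam_eq_some_of_mem_firstChoice {rep : α → List β} {t : α} {c : β}
    (h : t ∈ firstChoice M rep c) : iam M rep true t = some c := by
  rw [iam_eq_iterate_firstRound]
  exact iterate_iamRound_assign_of_eq_some M rep true _ _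
    ((firstRound_assign_eq_some_iff M rep t c).2 h)

theorem firstApplicants_update_singleton (rep : α → List β) (s : α) (c : β) :
    firstApplicants (Function.update rep s [c]) c = insert s (firstApplicants rep c) := by
  ext t
  by_cases ht : t = s
  · subst ht
    simp [firstApplicants]
  · simp [firstApplicants, ht]

section FullSchool

variable {M} {rep : α → List β} {st : IAMState α β} {c : β}

/-- The reserve part of `acceptList` is not capped by the remaining capacity, so a full school
can still admit minority students, up to its reserve. -/
theorem roundChoice_of_full (hfull : M.cap c ≤ assignedCard st.assign c) :
    roundChoice M rep st c = reserveSeats (M.prio c) M.minority (roundApplicants rep st c).toList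
      (M.reserve c - minCard M st.assign c) := by
  rw [roundChoice, Nat.sub_eq_zero_of_le hfull, acceptList_eq le_rfl]
  simp [openSeats]

theorem iamRound_assign_eq_some_of_full (hfull : M.cap c ≤ assignedCard st.assign c) {t : α}
    (h : (iamRound M rep true st).assign t = some c) :
    st.assign t = some c ∨ (M.minority t = true ∧ minCard M st.assign c < M.reserve c) := by
  rcases (iamRound_assign_eq_some_iff M rep st t c).1 h with h | ⟨-, ht⟩
  · exact Or.inl h
  · rw [roundChoice_of_full hfull] at ht
    have hlen := List.length_pos_of_mem ht
    have hle : (reserveSeats (M.prio c) M.minority (roundApplicants rep st c).toList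
        (M.reserve c - minCard M st.assign c)).length ≤ M.reserve c - minCard M st.assign c :=
      List.length_take_le _ _
    exact Or.inr ⟨(mem_reserveSeats ht).2, by omega⟩

theorem minCard_iamRound_le_of_full (hfull : M.cap c ≤ assignedCard st.assign c) :
    minCard M (iamRound M rep true st).assign c ≤ max (M.reserve c) (minCard M st.assign c) := by
  set R := reserveSeats (M.prio c) M.minority (roundApplicants rep st c).toList
    (M.reserve c - minCard M st.assign c)
  have hsub : (univ.filter fun t => (iamRound M rep true st).assign t = some c ∧
      M.minority t = true) ⊆
      (univ.filter fun t => st.assign t = some c ∧ M.minority t = true) ∪ R.toFinset := by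
    intro t ht
    rw [mem_filter] at ht
    rcases (iamRound_assign_eq_some_iff M rep st t c).1 ht.2.1 with h | ⟨-, h⟩
    · exact mem_union_left _ (mem_filter.2 ⟨mem_univ t, h, ht.2.2⟩)
    · rw [roundChoice_of_full hfull] at h
      exact mem_union_right _ (List.mem_toFinset.2 h)
  have hR : R.length ≤ M.reserve c - minCard M st.assign c := List.length_take_le _ _
  have := (card_le_card hsub).trans (card_union_le _ _)
  have := R.toFinset_card_le
  unfold minCard at hR ⊢
  omega

theorem assignedCard_iamRound_of_full (hfull : M.cap c ≤ assignedCard st.assign c) :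
    M.cap c ≤ assignedCard (iamRound M rep true st).assign c :=
  hfull.trans (assignedCard_le_of_imp fun _ => iamRound_assign_of_eq_some M rep true st)

theorem iterate_iamRound_assign_eq_some_of_full (n : ℕ)
    (hfull : M.cap c ≤ assignedCard st.assign c) {t : α}
    (h : ((iamRound M rep true)^[n] st).assign t = some c) :
    st.assign t = some c ∨ (M.minority t = true ∧ minCard M st.assign c < M.reserve c) := by
  induction n generalizing st with
  | zero => exact Or.inl h
  | succ n ih =>
    have hmono : minCard M st.assign c ≤ minCard M (iamRound M rep true st).assign c :=
      minCard_le_of_imp M fun _ => iamRound_assign_of_eq_some M rep true st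
    rcases ih (assignedCard_iamRound_of_full hfull) h with h | ⟨hmin, hlt⟩
    · exact iamRound_assign_eq_some_of_full hfull h
    · exact Or.inr ⟨hmin, by omega⟩

theorem minCard_iterate_iamRound_le_of_full (n : ℕ)
    (hfull : M.cap c ≤ assignedCard st.assign c) :
    minCard M ((iamRound M rep true)^[n] st).assign c ≤
      max (M.reserve c) (minCard M st.assign c) := by
  induction n generalizing st with
  | zero => exact le_max_right _ _
  | succ n ih =>
    have := ih (assignedCard_iamRound_of_full (rep := rep) hfull)
    have := minCard_iamRound_le_of_full (rep := rep) hfull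
    rw [Function.iterate_succ_apply]
    omega

theorem iam_eq_some_of_full (hfull : M.cap c ≤ (firstChoice M rep c).length) {t : α}
    (h : iam M rep true t = some c) :
    t ∈ firstChoice M rep c ∨
      (M.minority t = true ∧ (firstChoice M rep c).countP M.minority < M.reserve c) := by
  rw [iam_eq_iterate_firstRound] at h
  rw [← firstRound_assign_eq_some_iff, ← minCard_firstRound]
  exact iterate_iamRound_assign_eq_some_of_full _ (by rwa [assignedCard_firstRound]) h

theorem minCard_iam_le_of_full (hfull : M.cap c ≤ (firstChoice M rep c).length) :
    minCard M (iam M rep true) c ≤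
      max (M.reserve c) ((firstChoice M rep c).countP M.minority) := by
  rw [iam_eq_iterate_firstRound, ← minCard_firstRound]
  exact minCard_iterate_iamRound_le_of_full _ (by rwa [assignedCard_firstRound])

theorem cap_le_assignedCard_iam_of_full (hfull : M.cap c ≤ (firstChoice M rep c).length) :
    M.cap c ≤ assignedCard (iam M rep true) c := by
  rw [iam_eq_iterate_firstRound, ← assignedCard_firstRound] at *
  exact hfull.trans (assignedCard_le_of_imp fun _ =>
    iterate_iamRound_assign_of_eq_some M rep true _ _)

end FullSchool

theorem iam_update_singleton_of_rBlock {pref rep : α → List β} {s : α} {c : β}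
    (hblk : RBlock M pref (iam M rep true) s c) :
    iam M (Function.update rep s [c]) true s = some c := by
  apply iam_eq_some_of_mem_firstChoice
  rw [firstChoice, firstApplicants_update_singleton]
  by_contra hrej
  have hfull : M.cap c ≤ (firstChoice M rep c).length := cap_le_length_acceptList_of_not_mem hrej
  rcases hblk.2 with hslack | ⟨hmin, s', hs', hlt⟩ | ⟨hmaj, hres, s', hs', hlt⟩ |
      ⟨hmaj, -, s', hs', hmaj', hlt⟩
  · exact absurd (cap_le_assignedCard_iam_of_full hfull) (not_le.2 hslack)
  · obtain ⟨hle, hreserve⟩ := forall_prio_le_of_minority_not_mem hmin hrej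
    rcases iam_eq_some_of_full hfull hs' with h | ⟨-, hlt'⟩
    · exact absurd (hle s' h) (not_le.2 hlt)
    · exact absurd hreserve (not_le.2 hlt')
  · have hmax := minCard_iam_le_of_full hfull
    have hle := forall_prio_le_of_reserve_lt_countP
      (forall_openSeats_prio_le_of_majority_not_mem hmaj hrej) (by rw [← firstChoice]; omega)
    rcases iam_eq_some_of_full hfull hs' with h | ⟨-, hlt'⟩
    · exact absurd (hle s' h) (not_le.2 hlt)
    · omega
  · rcases iam_eq_some_of_full hfull hs' with h | ⟨hmin', -⟩
    · exact absurd (forall_openSeats_prio_le_of_majority_not_mem hmaj hrej s'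
        (mem_openSeats_of_mem_acceptList h hmaj')) (not_le.2 hlt)
    · simp [hmaj'] at hmin'

end Rounds

end Market

open Market in
theorem iamR_unstable_not_nash_general {α β : Type*} [Fintype α] [DecidableEq α]
    [DecidableEq β] (M : Market α β) (truePref rep : α → List β)
    (htrue : ∀ s c, c ∈ truePref s)
    (hns : ¬ RStable M truePref (iam M rep true)) :
    (∃ (s : α) (c : β) (dev : List β),
      RBlock M truePref (iam M rep true) s c ∧ dev.head? = some c ∧
        prefStrict truePref s (iam M (Function.update rep s dev) true s)
          (iam M rep true s)) ∧
      ¬ NashEq M truePref rep true := by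
  obtain ⟨s, c, hblk⟩ : ∃ s c, RBlock M truePref (iam M rep true) s c := by
    by_contra! hcon
    exact hns ⟨fun s c _ => htrue s c, hcon⟩
  have hgain : prefStrict truePref s (iam M (Function.update rep s [c]) true s)
      (iam M rep true s) := by
    rw [iam_update_singleton_of_rBlock M hblk]
    exact hblk.1
  exact ⟨⟨s, c, [c], hblk, rfl, hgain⟩, fun hnash => hnash s [c] hgain⟩

open Market in
/-- If the IAM-R outcome of a stated profile `rep` is not R-stable with respect to the
true preferences, then `rep` is not a Nash equilibrium: a student in some
true-preference blocking pair `(s, c)` can profitably deviate by reporting a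
preference listing `c` first. -/
theorem iamR_unstable_not_nash {α β : Type*} [Fintype α] [DecidableEq α] [Fintype β]
    [DecidableEq β] (M : Market α β) (truePref rep : α → List β)
    (htrue : ∀ s c, c ∈ truePref s)
    (hq : ∀ c, M.quota c ≤ M.cap c)
    (hns : ¬ RStable M truePref (iam M rep true)) :
    (∃ (s : α) (c : β) (dev : List β),
      RBlock M truePref (iam M rep true) s c ∧ dev.head? = some c ∧
        prefStrict truePref s (iam M (Function.update rep s dev) true s)
          (iam M rep true s)) ∧
      ¬ NashEq M truePref rep true :=
  iamR_unstable_not_nash_general M truePref rep htrue hns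
end

section
/- Under the top trading cycles mechanism, the majority quota and its corresponding minority reserve can produce different matchings: in the market with two schools c₁ (capacity 2), c₂ (capacity 1), majority students s₁, s₂ and minority student s₃, priorities ≻_{c₁}: s₂, s₃, s₁ and ≻_{c₂}: s₁, s₂, s₃, preferences P_{s₁}: c₁ only, P_{s₂}: c₂ only, P_{s₃}: c₂ only, with majority quotas (q^M_{c₁}, q^M_{c₂}) = (1,1): TTCM-Q assigns s₁→c₁, s₂→c₂, s₃ unmatched, while TTCM-R (with reserves (r^m_{c₁}, r^m_{c₂}) = (1,0)) assigns s₁→c₁, s₃→c₂, s₂ unmatched. -/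
open Finset

/-! In both versions s₁ points to c₁ and s₂, s₃ point to c₂, which points to its top student s₁.
Under the majority quota c₁ points to its top student s₂, closing the cycle s₁ → c₁ → s₂ → c₂;
under the minority reserve its positive reserve counter makes it point to the minority student s₃
instead, closing s₁ → c₁ → s₃ → c₂. Either way c₂ is then full, so the student left over points
to herself and stays unmatched. -/

theorem List.argmin_eq_some_of_forall_lt {α β : Type*} [Preorder β] [DecidableLT β]
    {f : α → β} {l : List α} {m : α} (hm : m ∈ l) (h : ∀ a ∈ l, a ≠ m → f m < f a) :
    l.argmin f = some m := by
  obtain ⟨n, hn⟩ :=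
    Option.ne_none_iff_exists'.1 (mt (List.argmin_eq_none (f := f)).1 (List.ne_nil_of_mem hm))
  by_contra hne
  exact List.not_lt_of_mem_argmin hm hn
    (h n (List.argmin_mem hn) (by rintro rfl; exact hne hn))

theorem Finset.argmin_toList_eq_some_of_forall_lt {α β : Type*} [Preorder β] [DecidableLT β]
    {f : α → β} {s : Finset α} {m : α} (hm : m ∈ s) (h : ∀ a ∈ s, a ≠ m → f m < f a) :
    s.toList.argmin f = some m :=
  List.argmin_eq_some_of_forall_lt (mem_toList.2 hm) fun a ha => h a (mem_toList.1 ha)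

namespace Market

section General

variable {α β : Type*} [Fintype α] [DecidableEq β]
  {M : Market α β} {rep : α → List β} {u : Bool} {st : TTCState α β}

def initialState : TTCState α β := ⟨univ, fun _ => none⟩

theorem schoolPoint_eq_argmin_remaining {c : β}
    (h : u = false ∨ M.reserve c ≤ minCard M st.assign c) :
    schoolPoint M u st c = st.remaining.toList.argmin (M.prio c) := by
  rw [schoolPoint, if_neg]
  rintro ⟨hpos, -⟩
  split_ifs at hpos with hu
  · rcases h with rfl | h
    · exact Bool.false_ne_true hu
    · omega
  · exact hpos.false

theorem schoolPoint_true_eq_argmin_minority {c : β} (h : minCard M st.assign c < M.reserve c)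
    (hmin : (st.remaining.filter fun s => M.minority s = true).Nonempty) :
    schoolPoint M true st c =
      (st.remaining.filter fun s => M.minority s = true).toList.argmin (M.prio c) := by
  rw [schoolPoint, if_pos ⟨by simpa using h, hmin⟩]

theorem nextMap_eq_of_points {s t : α} {c : β} (hs : studentPoint M rep u st s = some c)
    (hc : schoolPoint M u st c = some t) : nextMap M rep u st s = t := by
  simp only [nextMap, hs, hc]

theorem inCycle_of_studentPoint_eq_none {s : α} (h : studentPoint M rep u st s = none) :
    inCycle M rep u st s :=
  ⟨1, mem_Icc.2 ⟨le_rfl, Fintype.card_pos_iff.2 ⟨s⟩⟩,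
    by simp only [Function.iterate_one, nextMap, h]⟩

variable [DecidableEq α]

theorem ttcStep_eq_of_cycles {C : Finset α} (hC : C ⊆ st.remaining)
    (hcyc : ∀ s ∈ st.remaining, inCycle M rep u st s ↔ s ∈ C) :
    ttcStep M rep u st = ⟨st.remaining \ C,
      fun s => if s ∈ C then studentPoint M rep u st s else st.assign s⟩ := by
  classical
  have hfilter : st.remaining.filter (inCycle M rep u st) = C := by
    ext s
    rw [mem_filter]
    exact ⟨fun ⟨hs, hin⟩ => (hcyc s hs).1 hin, fun hs => ⟨hC hs, (hcyc s (hC hs)).2 hs⟩⟩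
  simp only [ttcStep, hfilter]

theorem ttcStep_eq_of_forall_studentPoint_eq_none
    (hpt : ∀ s ∈ st.remaining, studentPoint M rep u st s = none)
    (hμ : ∀ s ∈ st.remaining, st.assign s = none) :
    ttcStep M rep u st = ⟨∅, st.assign⟩ := by
  rw [ttcStep_eq_of_cycles subset_rfl fun s hs => iff_of_true
    (inCycle_of_studentPoint_eq_none (hpt s hs)) hs, sdiff_self]
  congr
  funext s
  split_ifs with hs
  · rw [hpt s hs, hμ s hs]
  · rfl

theorem ttcm_eq_of_iterate_eq {n : ℕ} {μ : α → Option β} (hn : n ≤ Fintype.card α)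
    (h : (ttcStep M rep u)^[n] initialState = ⟨∅, μ⟩) : ttcm M rep u = μ := by
  have hfix : ttcStep M rep u ⟨∅, μ⟩ = ⟨∅, μ⟩ :=
    ttcStep_eq_of_forall_studentPoint_eq_none (by simp) (by simp)
  rw [ttcm, ← Nat.sub_add_cancel hn, Function.iterate_add_apply]
  change ((ttcStep M rep u)^[_] ((ttcStep M rep u)^[n] initialState)).assign = μ
  rw [h, Function.iterate_fixed hfix]

end General

def exampleMarket : Market (Fin 3) (Fin 2) :=
  { minority := ![false, false, true]
    prio := ![![2, 0, 1], ![0, 1, 2]]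
    cap := ![2, 1]
    quota := ![1, 1] }

def examplePrefs : Fin 3 → List (Fin 2) := ![[0], [1], [1]]

theorem nextMap_exampleMarket_quota :
    nextMap exampleMarket examplePrefs false initialState = ![1, 0, 0] := by
  have hc₁ : schoolPoint exampleMarket false initialState 0 = some 1 := by
    rw [schoolPoint_eq_argmin_remaining (.inl rfl)]
    exact Finset.argmin_toList_eq_some_of_forall_lt (by decide) (by decide)
  have hc₂ : schoolPoint exampleMarket false initialState 1 = some 0 := by
    rw [schoolPoint_eq_argmin_remaining (.inl rfl)]
    exact Finset.argmin_toList_eq_some_of_forall_lt (by decide) (by decide)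
  funext s
  fin_cases s
  exacts [nextMap_eq_of_points (by decide) hc₁, nextMap_eq_of_points (by decide) hc₂,
    nextMap_eq_of_points (by decide) hc₂]

theorem ttcStep_exampleMarket_quota :
    ttcStep exampleMarket examplePrefs false initialState = ⟨{2}, ![some 0, some 1, none]⟩ := by
  rw [ttcStep_eq_of_cycles (C := {0, 1}) (subset_univ _) fun s _ => by
    simp only [inCycle, nextMap_exampleMarket_quota]; revert s; decide]
  congr 1
  decide

theorem ttcm_exampleMarket_quota :
    ttcm exampleMarket examplePrefs false = ![some 0, some 1, none] :=
  ttcm_eq_of_iterate_eq (n := 2) (by simp) <| by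
    rw [Function.iterate_succ_apply', Function.iterate_one, ttcStep_exampleMarket_quota,
      ttcStep_eq_of_forall_studentPoint_eq_none] <;> decide

theorem nextMap_exampleMarket_reserve :
    nextMap exampleMarket examplePrefs true initialState = ![2, 0, 0] := by
  have hc₁ : schoolPoint exampleMarket true initialState 0 = some 2 := by
    rw [schoolPoint_true_eq_argmin_minority (by decide) (by decide)]
    exact Finset.argmin_toList_eq_some_of_forall_lt (by decide) (by decide)
  have hc₂ : schoolPoint exampleMarket true initialState 1 = some 0 := by
    rw [schoolPoint_eq_argmin_remaining (.inr (by decide))]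
    exact Finset.argmin_toList_eq_some_of_forall_lt (by decide) (by decide)
  funext s
  fin_cases s
  exacts [nextMap_eq_of_points (by decide) hc₁, nextMap_eq_of_points (by decide) hc₂,
    nextMap_eq_of_points (by decide) hc₂]

theorem ttcStep_exampleMarket_reserve :
    ttcStep exampleMarket examplePrefs true initialState = ⟨{1}, ![some 0, none, some 1]⟩ := by
  rw [ttcStep_eq_of_cycles (C := {0, 2}) (subset_univ _) fun s _ => by
    simp only [inCycle, nextMap_exampleMarket_reserve]; revert s; decide]
  congr 1
  decide

theorem ttcm_exampleMarket_reserve :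
    ttcm exampleMarket examplePrefs true = ![some 0, none, some 1] :=
  ttcm_eq_of_iterate_eq (n := 2) (by simp) <| by
    rw [Function.iterate_succ_apply', Function.iterate_one, ttcStep_exampleMarket_reserve,
      ttcStep_eq_of_forall_studentPoint_eq_none] <;> decide

end Market

open Market in
/-- In the 2-school, 3-student market (c₁ capacity 2, c₂ capacity 1, quotas (1,1),
i.e. reserves (1,0); majority s₁,s₂, minority s₃; priorities ≻_{c₁}: s₂,s₃,s₁ and
≻_{c₂}: s₁,s₂,s₃; preferences s₁: c₁, s₂: c₂, s₃: c₂), TTCM-Q assigns s₁→c₁, s₂→c₂,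
s₃ unmatched, while TTCM-R assigns s₁→c₁, s₃→c₂, s₂ unmatched. -/
theorem ttcmQ_ttcmR_differ_in_example :
    let M : Market (Fin 3) (Fin 2) :=
      { minority := ![false, false, true]
        prio := ![![2, 0, 1], ![0, 1, 2]]
        cap := ![2, 1]
        quota := ![1, 1] }
    let rep : Fin 3 → List (Fin 2) := ![[0], [1], [1]]
    ttcm M rep false = ![some 0, some 1, none] ∧
      ttcm M rep true = ![some 0, none, some 1] ∧
      ttcm M rep false ≠ ttcm M rep true := by
  intro M rep
  have hQ : ttcm M rep false = ![some 0, some 1, none] := ttcm_exampleMarket_quota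
  have hR : ttcm M rep true = ![some 0, none, some 1] := ttcm_exampleMarket_reserve
  refine ⟨hQ, hR, ?_⟩
  rw [hQ, hR]
  decide
end
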